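/- arXiv:1510.00055 — 2 statements merged into one kernel-verified Lean document; each statement's English description precedes it below -/
import Mathlib

section
/- Let w ∈ ℂ^m be a fixed vector, let R₀ be an m×m Hermitian positive semidefinite complex matrix, and for q = 1,…,Q let B_q be an m×(P·N) complex matrix and R_q a P×P Hermitian positive semidefinite complex matrix. For s ∈ ℂ^N (regarded as an N×1 matrix) define f(s) = Re( wᴴ ( R₀ + Σ_{q=1}^{Q} B_q (I_P ⊗ s) R_q (I_P ⊗ s)ᴴ B_qᴴ ) w ), where I_P ⊗ s is the PN×P Kronecker product of the P×P identity with s. Then f is convex on ℂ^N viewed as a real vector space, i.e. f(t s₁ + (1−t) s₂) ≤ t f(s₁) + (1−t) f(s₂) for all s₁, s₂ ∈ ℂ^N and t ∈ [0,1]. -/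
open Matrix
open scoped ComplexOrder Kronecker

/-!
Each clutter term is `y R_q yᴴ` for the row vector `y = wᴴ B_q (I_P ⊗ s)`, which depends
linearly on `s`, and `R₀` does not involve `s` at all. A positive semidefinite quadratic form
`Q(y) = Re (y R yᴴ)` is convex because
`t Q(u) + (1 - t) Q(v) - Q(t u + (1 - t) v) = t (1 - t) Q(u - v) ≥ 0`,
and convexity survives precomposition with linear maps and finite sums.
-/

/-- The STAP output-power objective `f(s) = Re (wᴴ R_u(s) w)`, where
`R_u(s) = R₀ + Σ_q B_q (I_P ⊗ s) R_q (I_P ⊗ s)ᴴ B_qᴴ`; the waveform `s` is a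
column vector, i.e. an `N × 1` matrix. -/
noncomputable def stapObjective (m N P Q : ℕ)
    (w : Matrix (Fin m) (Fin 1) ℂ)
    (R₀ : Matrix (Fin m) (Fin m) ℂ)
    (B : Fin Q → Matrix (Fin m) (Fin P × Fin N) ℂ)
    (R : Fin Q → Matrix (Fin P × Fin 1) (Fin P × Fin 1) ℂ)
    (s : Matrix (Fin N) (Fin 1) ℂ) : ℝ :=
  ((wᴴ *
      (R₀ + ∑ q : Fin Q,
        B q * ((1 : Matrix (Fin P) (Fin P) ℂ) ⊗ₖ s) * R q *
          ((1 : Matrix (Fin P) (Fin P) ℂ) ⊗ₖ s)ᴴ * (B q)ᴴ) *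
      w) 0 0).re

namespace Matrix

lemma IsHermitian.re_mul_mul_conjTranspose_apply_comm {ι n : Type*} [Fintype n]
    {R : Matrix n n ℂ} (hR : R.IsHermitian) (u v : Matrix ι n ℂ) (j : ι) :
    ((u * R * vᴴ) j j).re = ((v * R * uᴴ) j j).re := by
  have : (u * R * vᴴ)ᴴ = v * R * uᴴ := by
    simp only [conjTranspose_mul, conjTranspose_conjTranspose, hR.eq, Matrix.mul_assoc]
  rw [← this, conjTranspose_apply, Complex.star_def, Complex.conj_re]

lemma PosSemidef.convexOn_re_mul_mul_conjTranspose_apply {ι n : Type*} [Fintype ι]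
    [Fintype n] {R : Matrix n n ℂ} (hR : R.PosSemidef) (j : ι) :
    ConvexOn ℝ Set.univ fun v : Matrix ι n ℂ => ((v * R * vᴴ) j j).re := by
  refine ⟨convex_univ, fun u _ v _ a b ha hb hab => ?_⟩
  have hdiff : 0 ≤ (((u - v) * R * (u - v)ᴴ) j j).re :=
    (Complex.le_def.mp ((hR.mul_mul_conjTranspose_same (u - v)).diag_nonneg (i := j))).1
  have hcomm := hR.1.re_mul_mul_conjTranspose_apply_comm u v j
  simp only [smul_eq_mul, conjTranspose_add, conjTranspose_sub, conjTranspose_smul,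
    star_trivial, Matrix.add_mul, Matrix.mul_add, Matrix.sub_mul, Matrix.mul_sub,
    Matrix.smul_mul, Matrix.mul_smul, Matrix.add_apply, Matrix.sub_apply, Matrix.smul_apply,
    Complex.add_re, Complex.sub_re, Complex.smul_re] at hdiff hcomm ⊢
  obtain rfl : b = 1 - a := by linarith
  nlinarith [mul_nonneg ha hb]

end Matrix

lemma convexOn_sum {ι E : Type*} [AddCommMonoid E] [Module ℝ E] {D : Set E}
    (hD : Convex ℝ D) (s : Finset ι) (f : ι → E → ℝ) (hf : ∀ i ∈ s, ConvexOn ℝ D (f i)) :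
    ConvexOn ℝ D fun x => ∑ i ∈ s, f i x := by
  simp_rw [← Finset.sum_apply]
  exact Finset.sum_induction f (ConvexOn ℝ D) (fun _ _ => ConvexOn.add)
    (convexOn_const 0 hD) hf

noncomputable def mulKroneckerLinearMap {l k k' n p : Type*} [Fintype k] [Fintype n]
    (X : Matrix l (k × n) ℂ) (A : Matrix k k' ℂ) : Matrix n p ℂ →ₗ[ℝ] Matrix l (k' × p) ℂ :=
  mulLeftLinearMap (k' × p) ℝ X ∘ₗ kroneckerBilinear A

@[simp]
lemma mulKroneckerLinearMap_apply {l k k' n p : Type*} [Fintype k] [Fintype n]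
    (X : Matrix l (k × n) ℂ) (A : Matrix k k' ℂ) (s : Matrix n p ℂ) :
    mulKroneckerLinearMap X A s = X * (A ⊗ₖ s) :=
  rfl

lemma stapObjective_eq (m N P Q : ℕ) (w : Matrix (Fin m) (Fin 1) ℂ)
    (R₀ : Matrix (Fin m) (Fin m) ℂ) (B : Fin Q → Matrix (Fin m) (Fin P × Fin N) ℂ)
    (R : Fin Q → Matrix (Fin P × Fin 1) (Fin P × Fin 1) ℂ) :
    stapObjective m N P Q w R₀ B R = fun s => (∑ q,
      ((mulKroneckerLinearMap (wᴴ * B q) (1 : Matrix (Fin P) (Fin P) ℂ) s * R q *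
        (mulKroneckerLinearMap (wᴴ * B q) (1 : Matrix (Fin P) (Fin P) ℂ) s)ᴴ) 0 0).re) +
      ((wᴴ * R₀ * w) 0 0).re := by
  ext s
  simp only [stapObjective, mulKroneckerLinearMap_apply, Matrix.mul_add, Matrix.add_mul,
    Matrix.mul_sum, Matrix.sum_mul, Matrix.add_apply, Matrix.sum_apply, Complex.add_re,
    Complex.re_sum, conjTranspose_mul, conjTranspose_conjTranspose, Matrix.mul_assoc]
  exact add_comm _ _

theorem stmt_0_general (m N P Q : ℕ)
    (w : Matrix (Fin m) (Fin 1) ℂ)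
    (R₀ : Matrix (Fin m) (Fin m) ℂ)
    (B : Fin Q → Matrix (Fin m) (Fin P × Fin N) ℂ)
    (R : Fin Q → Matrix (Fin P × Fin 1) (Fin P × Fin 1) ℂ)
    (hR : ∀ q, (R q).PosSemidef)
    (s₁ s₂ : Matrix (Fin N) (Fin 1) ℂ) (t : ℝ) (ht : t ∈ Set.Icc (0 : ℝ) 1) :
    stapObjective m N P Q w R₀ B R (t • s₁ + (1 - t) • s₂) ≤
      t * stapObjective m N P Q w R₀ B R s₁ +
        (1 - t) * stapObjective m N P Q w R₀ B R s₂ := by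
  have hconvex : ConvexOn ℝ Set.univ (stapObjective m N P Q w R₀ B R) := by
    rw [stapObjective_eq]
    refine (convexOn_sum convex_univ _ _ fun q _ => ?_).add_const _
    exact ((hR q).convexOn_re_mul_mul_conjTranspose_apply 0).comp_linearMap _
  exact hconvex.2 trivial trivial ht.1 (sub_nonneg.2 ht.2) (add_sub_cancel t 1)

/-- Proposition 1: the STAP objective is convex in the waveform `s` for any
fixed but arbitrary filter `w`. -/
theorem stmt_0 (m N P Q : ℕ)
    (w : Matrix (Fin m) (Fin 1) ℂ)
    (R₀ : Matrix (Fin m) (Fin m) ℂ) (hR₀ : R₀.PosSemidef)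
    (B : Fin Q → Matrix (Fin m) (Fin P × Fin N) ℂ)
    (R : Fin Q → Matrix (Fin P × Fin 1) (Fin P × Fin 1) ℂ)
    (hR : ∀ q, (R q).PosSemidef)
    (s₁ s₂ : Matrix (Fin N) (Fin 1) ℂ) (t : ℝ) (ht : t ∈ Set.Icc (0 : ℝ) 1) :
    stapObjective m N P Q w R₀ B R (t • s₁ + (1 - t) • s₂) ≤
      t * stapObjective m N P Q w R₀ B R s₁ +
        (1 - t) * stapObjective m N P Q w R₀ B R s₂ :=
  stmt_0_general m N P Q w R₀ B R hR s₁ s₂ t ht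
end

section
/- Let A and B be n×n Hermitian complex matrices, and let λ₁(A) ≥ λ₂(A) ≥ … ≥ λ_n(A) and λ₁(B) ≥ λ₂(B) ≥ … ≥ λ_n(B) denote their eigenvalues arranged in nonincreasing order. Then Σ_{i=1}^{n} λ_i(A) λ_{n−i+1}(B) ≤ Re(Tr(AB)) ≤ Σ_{i=1}^{n} λ_i(A) λ_i(B). (For Hermitian A and B the trace Tr(AB) is real.) -/
/-!
Write `A = U D Uᴴ` and `B = V E Vᴴ` with `D`, `E` the diagonal eigenvalue matrices and put
`W = Uᴴ V`. Then `Tr (A B) = Σ_{i,j} λ_i(A) λ_j(B) |W_ij|²`, and since `W` is unitary the matrix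
`(|W_ij|²)` is doubly stochastic. By Birkhoff's theorem it is a convex combination of permutation
matrices, so `Re (Tr (A B))` is a convex combination of the sums `Σ_i λ_i(A) λ_{π i}(B)`, each of
which lies between the two bounds by the rearrangement inequality.
-/

open Matrix

namespace Matrix

variable {n : Type*} [Fintype n]

lemma trace_conj_mul_conj {R : Type*} [CommSemiring R] [StarRing R] (U V D E : Matrix n n R) :
    (U * D * star U * (V * E * star V)).trace =
      (D * (star U * V) * E * star (star U * V)).trace := by
  simpa only [star_mul, star_star, mul_assoc] using trace_mul_comm U (D * star U * V * E * star V)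

variable [DecidableEq n]

lemma dotProduct_mulVec_mem_of_mem_doublyStochastic {R : Type*} [Field R] [LinearOrder R]
    [IsStrictOrderedRing R] {s : Set R} (hs : Convex R s) {S : Matrix n n R}
    (hS : S ∈ doublyStochastic R n) {x y : n → R} (h : ∀ π : Equiv.Perm n, x ⬝ᵥ y ∘ π ∈ s) :
    x ⬝ᵥ S *ᵥ y ∈ s := by
  obtain ⟨w, hw0, hw1, rfl⟩ := exists_eq_sum_perm_of_mem_doublyStochastic hS
  simp only [sum_mulVec, smul_mulVec, dotProduct_sum, dotProduct_smul, permMatrix_mulVec]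
  exact hs.sum_mem (fun π _ => hw0 π) hw1 fun π _ => h π

variable {𝕜 : Type*} [RCLike 𝕜]

lemma map_norm_sq_mem_doublyStochastic {W : Matrix n n 𝕜} (hW : W ∈ unitaryGroup n 𝕜) :
    W.map (‖·‖ ^ 2) ∈ doublyStochastic ℝ n := by
  refine mem_doublyStochastic_iff_sum.2 ⟨fun i j => sq_nonneg _, fun i => ?_, fun j => ?_⟩
  · have h := congrFun (congrFun (mem_unitaryGroup_iff.1 hW) i) i
    simp only [mul_apply, star_apply, RCLike.star_def, RCLike.mul_conj, one_apply_eq] at h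
    exact_mod_cast h
  · have h := congrFun (congrFun (mem_unitaryGroup_iff'.1 hW) j) j
    simp only [mul_apply, star_apply, RCLike.star_def, RCLike.conj_mul, one_apply_eq] at h
    exact_mod_cast h

lemma trace_diagonal_mul_mul_diagonal_mul_star (d e : n → ℝ) (W : Matrix n n 𝕜) :
    (diagonal (RCLike.ofReal ∘ d) * W * diagonal (RCLike.ofReal ∘ e) * star W).trace =
      ((d ⬝ᵥ W.map (‖·‖ ^ 2) *ᵥ e : ℝ) : 𝕜) := by
  simp only [trace, diag_apply, mul_apply (N := star W), mul_diagonal, diagonal_mul, star_apply,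
    RCLike.star_def, dotProduct, mulVec, map_apply, Function.comp_apply, Finset.mul_sum]
  push_cast
  refine Finset.sum_congr rfl fun i _ => Finset.sum_congr rfl fun j _ => ?_
  rw [← RCLike.mul_conj]
  ring

lemma IsHermitian.trace_mul {A B : Matrix n n 𝕜} (hA : A.IsHermitian) (hB : B.IsHermitian) :
    (A * B).trace = (hA.eigenvalues ⬝ᵥ
      (star (hA.eigenvectorUnitary : Matrix n n 𝕜) * (hB.eigenvectorUnitary : Matrix n n 𝕜)).map
        (‖·‖ ^ 2) *ᵥ hB.eigenvalues : ℝ) := by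
  conv_lhs => rw [hA.spectral_theorem, hB.spectral_theorem]
  rw [Unitary.conjStarAlgAut_apply, Unitary.conjStarAlgAut_apply, trace_conj_mul_conj,
    trace_diagonal_mul_mul_diagonal_mul_star]

end Matrix

lemma Antitone.dotProduct_comp_perm_mem_Icc {n : ℕ} {a b : Fin n → ℝ} (ha : Antitone a)
    (hb : Antitone b) (π : Equiv.Perm (Fin n)) :
    a ⬝ᵥ b ∘ π ∈ Set.Icc (∑ i, a i * b i.rev) (∑ i, a i * b i) := by
  have hrev : Antivary a (b ∘ Fin.revPerm) :=
    ha.antivary fun i j hij => hb (Fin.rev_le_rev.mpr hij)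
  constructor
  · simpa [dotProduct] using hrev.sum_mul_le_sum_mul_comp_perm (σ := π.trans Fin.revPerm)
  · exact (ha.monovary hb).sum_mul_comp_perm_le_sum_mul

/-- Lemma 4 (Ruhe/Lasserre trace inequality): if `a` and `b` enumerate the
eigenvalues of the Hermitian matrices `A` and `B` in nonincreasing order, then
`Σ_i a_i b_{n-i+1} ≤ Re (Tr (A B)) ≤ Σ_i a_i b_i`. -/
theorem stmt_5 (n : ℕ) (A B : Matrix (Fin n) (Fin n) ℂ)
    (hA : A.IsHermitian) (hB : B.IsHermitian)
    (a b : Fin n → ℝ) (σ τ : Equiv.Perm (Fin n))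
    (haσ : a = hA.eigenvalues ∘ σ) (hbτ : b = hB.eigenvalues ∘ τ)
    (ha : Antitone a) (hb : Antitone b) :
    (∑ i : Fin n, a i * b i.rev) ≤ ((A * B).trace).re ∧
      ((A * B).trace).re ≤ ∑ i : Fin n, a i * b i := by
  have hW : star (hA.eigenvectorUnitary : Matrix (Fin n) (Fin n) ℂ) * hB.eigenvectorUnitary ∈
      unitaryGroup (Fin n) ℂ :=
    Submonoid.mul_mem _ (Unitary.star_mem hA.eigenvectorUnitary.2) hB.eigenvectorUnitary.2
  rw [← Set.mem_Icc, hA.trace_mul hB]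
  refine dotProduct_mulVec_mem_of_mem_doublyStochastic (convex_Icc _ _)
    (map_norm_sq_mem_doublyStochastic hW) fun π => ?_
  have hrelabel : hA.eigenvalues ⬝ᵥ hB.eigenvalues ∘ π = a ⬝ᵥ b ∘ (σ.trans π).trans τ.symm := by
    subst haσ hbτ
    simpa [Function.comp_def] using
      dotProduct_comp_equiv_symm hA.eigenvalues (hB.eigenvalues ∘ π ∘ σ) σ
  rw [hrelabel]
  exact ha.dotProduct_comp_perm_mem_Icc hb _
end
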